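/- arXiv:1707.08890 — 5 statements merged into one kernel-verified Lean document; each statement's English description precedes it below -/
import Mathlib

section
/- Let 0 < α < 2, c > 0, and let μ₁, μ₂ ∈ S(α, c). Let Z₁, …, Z_n be i.i.d. with distribution μ₁ and Z₁*, …, Z_n* be i.i.d. with distribution μ₂. Let (a₁, …, a_n) ∈ ℝⁿ, A_n = (Σ_{k=1}^n |a_k|^α)^{1/α}, and δ_n = max_{1≤k≤n} |a_k| / A_n. Then for every t ∈ ℝ with |t|·δ_n ≤ 1 one has |E exp(i t A_n^{-1} Σ_{k=1}^n a_k Z_k) − E exp(i t A_n^{-1} Σ_{k=1}^n a_k Z_k*)| ≤ |t|^α · ρ(μ₁, μ₂). -/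
/-!
By independence both expectations are products `∏ φⱼ(a_k s)` with `s = t / A_n`, and
`‖∏ x_k - ∏ y_k‖ ≤ ∑ ‖x_k - y_k‖` for factors in the unit disc. Since `|a_k s| ≤ |t| δ_n ≤ 1`,
each difference `φ₁(u) - φ₂(u) = (β₁(u) - β₂(u)) |u|^α` is at most `sup_{|u| ≤ 1} |β₁ - β₂| · |u|^α`,
the supremum is the first summand of `ρ`, and `∑ |a_k s|^α ≤ |t|^α` by the choice of `A_n`.
-/

open MeasureTheory Filter Finset
open scoped Topology BoundedContinuousFunction ENNReal

/-- The characteristic function of a measure on `ℝ`. -/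
noncomputable def charFn (μ : Measure ℝ) (t : ℝ) : ℂ :=
  ∫ x, Complex.exp (Complex.I * (t * x)) ∂μ

/-- `μ ∈ S(α, c)`: `μ` is a symmetric probability distribution on `ℝ` whose characteristic
function satisfies `φ(t) = 1 - c|t|^α + o(|t|^α)` as `t → 0`. -/
def MemS (α c : ℝ) (μ : Measure ℝ) : Prop :=
  IsProbabilityMeasure μ ∧ μ.map (fun x => -x) = μ ∧
    Asymptotics.IsLittleO (𝓝 (0 : ℝ))
      (fun t : ℝ => charFn μ t - ((1 - c * |t| ^ α : ℝ) : ℂ))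
      (fun t : ℝ => |t| ^ α)

/-- `β` is the function associated with `μ ∈ S(α, c)`:
`φ(t) = 1 - c|t|^α + β(t)|t|^α` with `β` bounded continuous and `β 0 = 0`. -/
structure IsAssocFn (α c : ℝ) (μ : Measure ℝ) (β : ℝ → ℝ) : Prop where
  continuous : Continuous β
  bounded : ∃ M : ℝ, ∀ t, |β t| ≤ M
  zero : β 0 = 0
  eq : ∀ t : ℝ, charFn μ t = ((1 - c * |t| ^ α + β t * |t| ^ α : ℝ) : ℂ)

/-- The metric `ρ` on `S(α, c)`, expressed in terms of the associated functions. -/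
noncomputable def rho (β₁ β₂ : ℝ → ℝ) : ℝ :=
  (⨆ t : {t : ℝ // |t| ≤ 1}, |β₁ t.1 - β₂ t.1|) +
    ∑' k : ℕ, (2 ^ k : ℝ)⁻¹ *
      ⨆ t : {t : ℝ // 2 ^ k ≤ |t| ∧ |t| ≤ 2 ^ (k + 1)}, |β₁ t.1 - β₂ t.1|

/-- The normalization `A_N = (∑_{k=1}^N |a_k|^α)^{1/α}`. -/
noncomputable def wA (α : ℝ) (a : ℕ → ℝ) (N : ℕ) : ℝ :=
  (∑ k ∈ Finset.range N, |a k| ^ α) ^ (1 / α)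

/-- The uniform asymptotic negligibility condition `max_{1≤k≤N} |a_k| = o(A_N)`. -/
def UAN (α : ℝ) (a : ℕ → ℝ) : Prop :=
  ∀ ε > (0 : ℝ), ∃ N₀ : ℕ, ∀ N ≥ N₀, ∀ k < N, |a k| ≤ ε * wA α a N

/-- `F` is a distribution function. -/
def IsDistFun (F : ℝ → ℝ) : Prop :=
  Monotone F ∧ Tendsto F atBot (𝓝 0) ∧ Tendsto F atTop (𝓝 1)

/-- `(X_n)` is a determining sequence: relative to any set `A` of positive probability, it
has a limit distribution `F_A`. -/
def Determining {Ω : Type*} [MeasurableSpace Ω] (P : Measure Ω) (X : ℕ → Ω → ℝ) : Prop :=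
  ∀ A : Set Ω, MeasurableSet A → P A ≠ 0 →
    ∃ F : ℝ → ℝ, IsDistFun F ∧
      ∀ t : ℝ, ContinuousAt F t →
        Tendsto (fun n => (P (A ∩ {ω | X n ω < t})).toReal / (P A).toReal) atTop (𝓝 (F t))

/-- `μ` is the limit random measure of the determining sequence `(X_n)`: a measurable map to
the probability measures on `ℝ` such that for every continuity point `t` of `F_Ω` the
indicators `1{X_n ≤ t}` converge weakly in `L^∞` to `μ(-∞, t]`. -/
def IsLimitRandomMeasure {Ω : Type*} [MeasurableSpace Ω] (P : Measure Ω)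
    (X : ℕ → Ω → ℝ) (μ : Ω → Measure ℝ) : Prop :=
  (∀ ω, IsProbabilityMeasure (μ ω)) ∧
  (∀ s : Set ℝ, MeasurableSet s → Measurable fun ω => μ ω s) ∧
  ∃ F : ℝ → ℝ, IsDistFun F ∧
    (∀ t : ℝ, ContinuousAt F t →
      Tendsto (fun n => (P {ω | X n ω < t}).toReal) atTop (𝓝 (F t))) ∧
    ∀ t : ℝ, ContinuousAt F t → ∀ η : Ω → ℝ, Integrable η P →
      Tendsto (fun n => ∫ ω, ({ω' | X n ω' ≤ t}.indicator (fun _ => (1 : ℝ)) ω) * η ω ∂P)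
        atTop (𝓝 (∫ ω, (μ ω (Set.Iic t)).toReal * η ω ∂P))

open ProbabilityTheory

theorem Finset.norm_prod_sub_prod_le_sum_norm_sub {ι R : Type*} [NormedCommRing R] [NormOneClass R]
    (s : Finset ι) {x y : ι → R} (hx : ∀ i ∈ s, ‖x i‖ ≤ 1)
    (hy : ∀ i ∈ s, ‖y i‖ ≤ 1) :
    ‖∏ i ∈ s, x i - ∏ i ∈ s, y i‖ ≤ ∑ i ∈ s, ‖x i - y i‖ := by
  classical
  induction s using Finset.induction_on with
  | empty => simp
  | @insert j s hj ih =>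
    simp only [Finset.forall_mem_insert] at hx hy
    have hys : ‖∏ i ∈ s, y i‖ ≤ 1 :=
      (Finset.norm_prod_le s y).trans (Finset.prod_le_one (fun _ _ => norm_nonneg _) hy.2)
    rw [Finset.prod_insert hj, Finset.prod_insert hj, Finset.sum_insert hj]
    calc ‖x j * ∏ i ∈ s, x i - y j * ∏ i ∈ s, y i‖
        = ‖x j * (∏ i ∈ s, x i - ∏ i ∈ s, y i) + (x j - y j) * ∏ i ∈ s, y i‖ := by ring_nf
      _ ≤ ‖x j‖ * ‖∏ i ∈ s, x i - ∏ i ∈ s, y i‖ + ‖x j - y j‖ * ‖∏ i ∈ s, y i‖ :=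
        (norm_add_le _ _).trans (add_le_add (norm_mul_le _ _) (norm_mul_le _ _))
      _ ≤ 1 * ∑ i ∈ s, ‖x i - y i‖ + ‖x j - y j‖ * 1 := by
        gcongr
        · exact hx.1
        · exact ih hx.2 hy.2
      _ = ‖x j - y j‖ + ∑ i ∈ s, ‖x i - y i‖ := by ring

theorem charFn_eq_charFun (μ : Measure ℝ) : charFn μ = charFun μ := by
  ext t
  simp only [charFn, charFun_apply_real, mul_comm Complex.I]

theorem integral_cexp_mul_sum_eq_prod_charFn {Ω ι : Type*} [MeasurableSpace Ω] [Fintype ι]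
    {P : Measure Ω} [IsFiniteMeasure P] {Z : ι → Ω → ℝ} (hZ : ∀ i, Measurable (Z i))
    (hind : iIndepFun Z P) (a : ι → ℝ) (s : ℝ) :
    ∫ ω, Complex.exp (Complex.I * ((s * ∑ i, a i * Z i ω : ℝ) : ℂ)) ∂P
      = ∏ i, charFn (P.map (Z i)) (a i * s) := by
  have hsum : Measurable fun ω => ∑ i, a i * Z i ω := by fun_prop
  have hweighted : iIndepFun (fun i ω => a i * Z i ω) P :=
    hind.comp (fun i x => a i * x) fun i => measurable_const.mul measurable_id
  calc ∫ ω, Complex.exp (Complex.I * ((s * ∑ i, a i * Z i ω : ℝ) : ℂ)) ∂P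
      = charFn (P.map fun ω => ∑ i, a i * Z i ω) s := by
        rw [charFn, integral_map hsum.aemeasurable (by fun_prop)]
        simp only [Complex.ofReal_mul]
    _ = ∏ i, charFn (P.map (Z i)) (a i * s) := by
        simp only [charFn_eq_charFun,
          hweighted.charFun_map_fun_sum_eq_prod fun i => (by fun_prop), Finset.prod_apply]
        exact Finset.prod_congr rfl fun i _ => charFun_map_mul_comp (hZ i).aemeasurable _ _

theorem norm_charFn_le_one (μ : Measure ℝ) [IsProbabilityMeasure μ] (s : ℝ) :
    ‖charFn μ s‖ ≤ 1 := by
  rw [charFn_eq_charFun]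
  exact norm_charFun_le_one s

theorem iSup_abs_sub_le_rho (β₁ β₂ : ℝ → ℝ) :
    ⨆ t : {t : ℝ // |t| ≤ 1}, |β₁ t.1 - β₂ t.1| ≤ rho β₁ β₂ :=
  le_add_of_nonneg_right <| tsum_nonneg fun _ =>
    mul_nonneg (by positivity) (Real.iSup_nonneg fun _ => abs_nonneg _)

namespace IsAssocFn

variable {α c : ℝ} {μ₁ μ₂ : Measure ℝ} {β₁ β₂ : ℝ → ℝ}

theorem norm_charFn_sub (hβ₁ : IsAssocFn α c μ₁ β₁) (hβ₂ : IsAssocFn α c μ₂ β₂) (s : ℝ) :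
    ‖charFn μ₁ s - charFn μ₂ s‖ = |β₁ s - β₂ s| * |s| ^ α := by
  rw [hβ₁.eq, hβ₂.eq, ← Complex.ofReal_sub, Complex.norm_real, Real.norm_eq_abs,
    show 1 - c * |s| ^ α + β₁ s * |s| ^ α - (1 - c * |s| ^ α + β₂ s * |s| ^ α)
      = (β₁ s - β₂ s) * |s| ^ α by ring,
    abs_mul, abs_of_nonneg (Real.rpow_nonneg (abs_nonneg s) α)]

theorem norm_charFn_sub_le (hβ₁ : IsAssocFn α c μ₁ β₁) (hβ₂ : IsAssocFn α c μ₂ β₂) {s : ℝ}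
    (hs : |s| ≤ 1) :
    ‖charFn μ₁ s - charFn μ₂ s‖ ≤ (⨆ t : {t : ℝ // |t| ≤ 1}, |β₁ t.1 - β₂ t.1|) * |s| ^ α := by
  obtain ⟨M₁, hM₁⟩ := hβ₁.bounded
  obtain ⟨M₂, hM₂⟩ := hβ₂.bounded
  have hbdd : BddAbove (Set.range fun t : {t : ℝ // |t| ≤ 1} => |β₁ t.1 - β₂ t.1|) :=
    ⟨M₁ + M₂, by
      rintro _ ⟨t, rfl⟩
      exact (abs_sub _ _).trans (add_le_add (hM₁ _) (hM₂ _))⟩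
  rw [hβ₁.norm_charFn_sub hβ₂]
  gcongr
  exact le_ciSup hbdd (⟨s, hs⟩ : {t : ℝ // |t| ≤ 1})

end IsAssocFn

theorem sum_abs_mul_rpow_le {ι : Type*} (s : Finset ι) {α : ℝ} (hα : 0 < α) (a : ι → ℝ)
    (t : ℝ) :
    ∑ i ∈ s, |a i * (t * ((∑ j ∈ s, |a j| ^ α) ^ (1 / α))⁻¹)| ^ α ≤ |t| ^ α := by
  set S := ∑ j ∈ s, |a j| ^ α
  have hS : 0 ≤ S := Finset.sum_nonneg fun _ _ => by positivity
  have hterm : ∀ i, |a i * (t * (S ^ (1 / α))⁻¹)| ^ α = |a i| ^ α * (S⁻¹ * |t| ^ α) := fun i => by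
    rw [abs_mul, abs_mul, abs_inv, abs_of_nonneg (by positivity : 0 ≤ S ^ (1 / α)),
      Real.mul_rpow (abs_nonneg _) (by positivity), Real.mul_rpow (abs_nonneg _) (by positivity),
      Real.inv_rpow (by positivity), one_div, Real.rpow_inv_rpow hS hα.ne', mul_comm S⁻¹]
  calc ∑ i ∈ s, |a i * (t * (S ^ (1 / α))⁻¹)| ^ α
      = S * S⁻¹ * |t| ^ α := by simp only [hterm, ← Finset.sum_mul, S, mul_assoc]
    _ ≤ |t| ^ α := mul_le_of_le_one_left (by positivity) mul_inv_le_one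

theorem statement2_general
    {Ω : Type*} [MeasurableSpace Ω] (P : Measure Ω) [IsProbabilityMeasure P]
    (α c : ℝ) (hα : 0 < α)
    (μ₁ μ₂ : Measure ℝ) (β₁ β₂ : ℝ → ℝ)
    (hβ₁ : IsAssocFn α c μ₁ β₁) (hβ₂ : IsAssocFn α c μ₂ β₂)
    (n : ℕ) (hn : 0 < n) (a : Fin n → ℝ)
    (Z Zstar : Fin n → Ω → ℝ)
    (hZmeas : ∀ i, Measurable (Z i))
    (hZind : ProbabilityTheory.iIndepFun Z P)
    (hZlaw : ∀ i, P.map (Z i) = μ₁)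
    (hZsmeas : ∀ i, Measurable (Zstar i))
    (hZsind : ProbabilityTheory.iIndepFun Zstar P)
    (hZslaw : ∀ i, P.map (Zstar i) = μ₂)
    (t : ℝ)
    (ht : |t| * ((Finset.univ.sup' (Finset.univ_nonempty_iff.mpr (Fin.pos_iff_nonempty.mp hn))
        fun i => |a i|) / (∑ i, |a i| ^ α) ^ (1 / α)) ≤ 1) :
    ‖((∫ ω, Complex.exp (Complex.I *
          ((t * (((∑ i, |a i| ^ α) ^ (1 / α))⁻¹ * ∑ i, a i * Z i ω) : ℝ))) ∂P) -
        ∫ ω, Complex.exp (Complex.I *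
          ((t * (((∑ i, |a i| ^ α) ^ (1 / α))⁻¹ * ∑ i, a i * Zstar i ω) : ℝ))) ∂P)‖
      ≤ |t| ^ α * rho β₁ β₂ := by
  set A := (∑ i, |a i| ^ α) ^ (1 / α)
  set s := t * A⁻¹
  have hweight : ∀ i, |a i * s| ≤ 1 := fun i => by
    have hA : 0 ≤ A := by positivity
    calc |a i * s| = |t| * (|a i| / A) := by
          rw [abs_mul, abs_mul, abs_inv, abs_of_nonneg hA, div_eq_mul_inv]; ring
      _ ≤ 1 := le_trans (by gcongr; exact Finset.le_sup' (fun i => |a i|) (Finset.mem_univ i)) ht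
  have hlaw_prob : ∀ {X : Ω → ℝ}, Measurable X → IsProbabilityMeasure (P.map X) :=
    fun hX => Measure.isProbabilityMeasure_map hX.aemeasurable
  simp only [← mul_assoc]
  rw [integral_cexp_mul_sum_eq_prod_charFn hZmeas hZind,
    integral_cexp_mul_sum_eq_prod_charFn hZsmeas hZsind]
  calc ‖∏ i, charFn (P.map (Z i)) (a i * s) - ∏ i, charFn (P.map (Zstar i)) (a i * s)‖
      ≤ ∑ i, ‖charFn (P.map (Z i)) (a i * s) - charFn (P.map (Zstar i)) (a i * s)‖ :=
        Finset.univ.norm_prod_sub_prod_le_sum_norm_sub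
          (fun i _ => have := hlaw_prob (hZmeas i); norm_charFn_le_one _ _)
          (fun i _ => have := hlaw_prob (hZsmeas i); norm_charFn_le_one _ _)
    _ = ∑ i, ‖charFn μ₁ (a i * s) - charFn μ₂ (a i * s)‖ := by simp only [hZlaw, hZslaw]
    _ ≤ ∑ i, (⨆ t : {t : ℝ // |t| ≤ 1}, |β₁ t.1 - β₂ t.1|) * |a i * s| ^ α :=
        Finset.sum_le_sum fun i _ => hβ₁.norm_charFn_sub_le hβ₂ (hweight i)
    _ ≤ rho β₁ β₂ * |t| ^ α := by
        have hsup := iSup_abs_sub_le_rho β₁ β₂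
        have hsup_nonneg : 0 ≤ ⨆ t : {t : ℝ // |t| ≤ 1}, |β₁ t.1 - β₂ t.1| :=
          Real.iSup_nonneg fun _ => abs_nonneg _
        rw [← Finset.mul_sum]
        exact mul_le_mul hsup (sum_abs_mul_rpow_le _ hα a t) (by positivity)
          (hsup_nonneg.trans hsup)
    _ = |t| ^ α * rho β₁ β₂ := mul_comm _ _

/-- **Lemma 1.** Let `μ₁, μ₂ ∈ S(α, c)`, let `Z₁, …, Z_n` and `Z₁*, …, Z_n*` be i.i.d.
sequences with respective distributions `μ₁`, `μ₂`, let `(a₁, …, a_n) ∈ ℝⁿ`,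
`A_n = (∑ |a_k|^α)^{1/α}`, `δ_n = max_k |a_k| / A_n`. Then for `|t| δ_n ≤ 1`,
`|E exp(it A_n⁻¹ ∑ a_k Z_k) - E exp(it A_n⁻¹ ∑ a_k Z_k*)| ≤ |t|^α ρ(μ₁, μ₂)`. -/
theorem statement2
    {Ω : Type*} [MeasurableSpace Ω] (P : Measure Ω) [IsProbabilityMeasure P]
    (α c : ℝ) (hα : 0 < α) (hα2 : α < 2) (hc : 0 < c)
    (μ₁ μ₂ : Measure ℝ) (β₁ β₂ : ℝ → ℝ)
    (h1 : MemS α c μ₁) (h2 : MemS α c μ₂)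
    (hβ₁ : IsAssocFn α c μ₁ β₁) (hβ₂ : IsAssocFn α c μ₂ β₂)
    (n : ℕ) (hn : 0 < n) (a : Fin n → ℝ)
    (Z Zstar : Fin n → Ω → ℝ)
    (hZmeas : ∀ i, Measurable (Z i))
    (hZind : ProbabilityTheory.iIndepFun Z P)
    (hZlaw : ∀ i, P.map (Z i) = μ₁)
    (hZsmeas : ∀ i, Measurable (Zstar i))
    (hZsind : ProbabilityTheory.iIndepFun Zstar P)
    (hZslaw : ∀ i, P.map (Zstar i) = μ₂)
    (t : ℝ)
    (ht : |t| * ((Finset.univ.sup' (Finset.univ_nonempty_iff.mpr (Fin.pos_iff_nonempty.mp hn))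
        fun i => |a i|) / (∑ i, |a i| ^ α) ^ (1 / α)) ≤ 1) :
    ‖((∫ ω, Complex.exp (Complex.I *
          ((t * (((∑ i, |a i| ^ α) ^ (1 / α))⁻¹ * ∑ i, a i * Z i ω) : ℝ))) ∂P) -
        ∫ ω, Complex.exp (Complex.I *
          ((t * (((∑ i, |a i| ^ α) ^ (1 / α))⁻¹ * ∑ i, a i * Zstar i ω) : ℝ))) ∂P)‖
      ≤ |t| ^ α * rho β₁ β₂ :=
  statement2_general P α c hα μ₁ μ₂ β₁ β₂ hβ₁ hβ₂ n hn a Z Zstar hZmeas hZind hZlaw hZsmeas hZsind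
    hZslaw t ht
end

section
/- Let (S, d) be a separable metric space and let ν, ν₁, ν₂, … be probability measures on the Borel sets of (S, d) such that ν_n → ν weakly. Let 𝓖 be a class of real-valued functions on S such that: (a) 𝓖 is locally equicontinuous, i.e. for every ε > 0 and x ∈ S there is δ = δ(ε, x) > 0 such that y ∈ S and d(x, y) ≤ δ imply |f(x) − f(y)| ≤ ε for every f ∈ 𝓖; and (b) there exists a continuous function g ≥ 0 on S such that |f(x)| ≤ g(x) for all f ∈ 𝓖 and x ∈ S, and ∫_S g dν_n → ∫_S g dν < ∞. Then ∫_S f dν_n → ∫_S f dν as n → ∞, uniformly in f ∈ 𝓖. -/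
/-!
Partition `S` into countably many pieces `A k` with `ν`-null frontiers such that on `A k` every
function of `𝓖 ∪ {g}` stays within `ε` of its value at some point `e k`; this is where
separability and local equicontinuity enter. Choose `K` with `∫_{Eᶜ} g dν ≤ ε`, where
`E = A 0 ∪ … ∪ A (K-1)`. For any probability measure `μ`, every `∫ f dμ` is then within
`ε + ∫_{Eᶜ} g dμ` of the Riemann sum `∑_{k<K} f (e k) μ (A k)`. By the portmanteau theorem
`νₙ (A k) → ν (A k)`, so the Riemann sums for `νₙ` converge to those for `ν` uniformly in `f`;
applied to `g`, together with `∫ g dνₙ → ∫ g dν`, this also makes the tails `∫_{Eᶜ} g dνₙ`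
eventually small.
-/

open MeasureTheory Filter Set Metric Function
open scoped Topology BoundedContinuousFunction

theorem frontier_diff_subset {X : Type*} [TopologicalSpace X] (s t : Set X) :
    frontier (s \ t) ⊆ frontier s ∪ frontier t := by
  simpa only [sdiff_eq, frontier_compl] using
    (frontier_inter_subset s tᶜ).trans (union_subset_union inter_subset_left inter_subset_right)

theorem measure_frontier_disjointed_eq_zero {X : Type*} [TopologicalSpace X] [MeasurableSpace X]
    {μ : Measure X} {B : ℕ → Set X} (hB : ∀ k, μ (frontier (B k)) = 0) (k : ℕ) :
    μ (frontier (disjointed B k)) = 0 :=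
  disjointedRec (p := fun t => μ (frontier t) = 0)
    (fun _ i ht => measure_mono_null (frontier_diff_subset _ _) (measure_union_null ht (hB i)))
    (hB k)

section Partition

variable {S : Type*} [PseudoMetricSpace S] [SecondCountableTopology S] [Nonempty S]
  [MeasurableSpace S] [OpensMeasurableSpace S]

theorem exists_partition_null_frontier_subset_ball (ν : Measure S) [SFinite ν] {ρ : S → ℝ}
    (hρ : ∀ x, 0 < ρ x) :
    ∃ (e : ℕ → S) (A : ℕ → Set S), Pairwise (Disjoint on A) ∧ (∀ k, MeasurableSet (A k)) ∧
      ⋃ k, A k = univ ∧ (∀ k, ν (frontier (A k)) = 0) ∧ ∀ k, A k ⊆ ball (e k) (ρ (e k)) := by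
  choose r hr hνr using fun x => exists_null_frontier_thickening ν {x} (hρ x)
  simp only [thickening_singleton] at hνr
  obtain ⟨T, hTc, hTcover⟩ :=
    TopologicalSpace.countable_cover_nhds fun x => ball_mem_nhds x (hr x).1
  have hT : T.Nonempty := by
    by_contra! hT
    exact empty_ne_univ (by simpa [hT] using hTcover)
  obtain ⟨e, rfl⟩ := hTc.exists_eq_range hT
  let B k := ball (e k) (r (e k))
  refine ⟨e, disjointed B, disjoint_disjointed B,
    MeasurableSet.disjointed fun k => isOpen_ball.measurableSet, ?_,
    measure_frontier_disjointed_eq_zero fun k => hνr (e k),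
    fun k => (disjointed_subset B k).trans (ball_subset_ball (hr _).2.le)⟩
  rw [iUnion_disjointed, ← hTcover, biUnion_range]

theorem Equicontinuous.exists_partition_null_frontier {α ι : Type*} [PseudoMetricSpace α]
    {F : ι → S → α} (hF : Equicontinuous F) (ν : Measure S) [SFinite ν] {ε : ℝ} (hε : 0 < ε) :
    ∃ (e : ℕ → S) (A : ℕ → Set S), Pairwise (Disjoint on A) ∧ (∀ k, MeasurableSet (A k)) ∧
      ⋃ k, A k = univ ∧ (∀ k, ν (frontier (A k)) = 0) ∧
      ∀ i k, ∀ x ∈ A k, dist (F i x) (F i (e k)) < ε := by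
  choose ρ hρ hosc using fun x => equicontinuousAt_iff.1 (hF x) ε hε
  obtain ⟨e, A, hAd, hAm, hAcov, hAν, hAball⟩ := exists_partition_null_frontier_subset_ball ν hρ
  exact ⟨e, A, hAd, hAm, hAcov, hAν, fun i k x hx => dist_comm (F i x) _ ▸ hosc _ x (hAball k hx) i⟩

end Partition

theorem equicontinuous_insert_of_forall_abs_sub_le {S : Type*} [PseudoMetricSpace S]
    {𝓖 : Set (S → ℝ)} {g : S → ℝ}
    (hequi : ∀ ε > (0 : ℝ), ∀ x : S, ∃ δ > (0 : ℝ),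
      ∀ y : S, dist x y ≤ δ → ∀ f ∈ 𝓖, |f x - f y| ≤ ε)
    (hg : Continuous g) : (insert g 𝓖).Equicontinuous := by
  intro x
  rw [equicontinuousAt_iff]
  intro ε hε
  obtain ⟨δ₁, hδ₁, h₁⟩ := hequi (ε / 2) (by positivity) x
  obtain ⟨δ₂, hδ₂, h₂⟩ := Metric.continuous_iff.1 hg x ε hε
  refine ⟨min δ₁ δ₂, lt_min hδ₁ hδ₂, fun y hy => ?_⟩
  rintro ⟨F, rfl | hF⟩
  · exact dist_comm (F y) _ ▸ h₂ y (hy.trans_le (min_le_right _ _))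
  · have := h₁ y (dist_comm x y ▸ hy.le.trans (min_le_left _ _)) F hF
    exact this.trans_lt (half_lt_self hε)

theorem tendsto_measureReal_of_null_frontier {S ι : Type*} [TopologicalSpace S] [MeasurableSpace S]
    [OpensMeasurableSpace S] [HasOuterApproxClosed S] {L : Filter ι}
    {ν : Measure S} {νn : ι → Measure S} [IsProbabilityMeasure ν] [∀ n, IsProbabilityMeasure (νn n)]
    (hweak : ∀ f : S →ᵇ ℝ, Tendsto (fun n => ∫ x, f x ∂(νn n)) L (𝓝 (∫ x, f x ∂ν)))
    {E : Set S} (hE : ν (frontier E) = 0) :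
    Tendsto (fun n => (νn n).real E) L (𝓝 (ν.real E)) := by
  let P n : ProbabilityMeasure S := ⟨νn n, inferInstance⟩
  have hP : Tendsto P L (𝓝 ⟨ν, inferInstance⟩) :=
    ProbabilityMeasure.tendsto_iff_forall_integral_tendsto.2 hweak
  exact (ENNReal.tendsto_toReal (measure_ne_top ν E)).comp
    (ProbabilityMeasure.tendsto_measure_of_null_frontier_of_tendsto' hP hE)

theorem tendsto_sum_mul_abs_measureReal_sub_of_null_frontier {S ι κ : Type*} [TopologicalSpace S]
    [MeasurableSpace S] [OpensMeasurableSpace S] [HasOuterApproxClosed S] {L : Filter ι}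
    {ν : Measure S} {νn : ι → Measure S} [IsProbabilityMeasure ν] [∀ n, IsProbabilityMeasure (νn n)]
    (hweak : ∀ f : S →ᵇ ℝ, Tendsto (fun n => ∫ x, f x ∂(νn n)) L (𝓝 (∫ x, f x ∂ν)))
    {A : κ → Set S} (hA : ∀ k, ν (frontier (A k)) = 0) (s : Finset κ) (c : κ → ℝ) :
    Tendsto (fun n => ∑ k ∈ s, c k * |(νn n).real (A k) - ν.real (A k)|) L (𝓝 0) := by
  simpa using tendsto_finsetSum s fun k _ =>
    ((tendsto_measureReal_of_null_frontier hweak (hA k)).sub_const (ν.real (A k))).abs.const_mul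
      (c k)

section RiemannSum

variable {S : Type*} [MeasurableSpace S]

def riemannSum (μ : Measure S) (e : ℕ → S) (A : ℕ → Set S) (K : ℕ) (F : S → ℝ) : ℝ :=
  ∑ k ∈ Finset.range K, F (e k) * μ.real (A k)

variable {μ ν : Measure S} {e : ℕ → S} {A : ℕ → Set S} {K : ℕ} {F g : S → ℝ} {ε : ℝ}

theorem exists_setIntegral_compl_biUnion_range_le (hAm : ∀ k, MeasurableSet (A k))
    (hAcov : ⋃ k, A k = univ) (hg : Integrable g μ) (hε : 0 < ε) :
    ∃ K, ∫ x in (⋃ k ∈ Finset.range K, A k)ᶜ, g x ∂μ ≤ ε := by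
  have hanti : Antitone fun K => (⋃ k ∈ Finset.range K, A k)ᶜ := fun a b hab =>
    compl_subset_compl.2 (biUnion_subset_biUnion_left (by simpa using hab))
  have hempty : ⋂ K, (⋃ k ∈ Finset.range K, A k)ᶜ = ∅ := by
    rw [← compl_iUnion, compl_empty_iff, eq_univ_iff_forall]
    intro x
    obtain ⟨k, hk⟩ := mem_iUnion.1 (hAcov ▸ mem_univ x)
    exact mem_iUnion.2 ⟨k + 1, mem_iUnion₂.2 ⟨k, by simp, hk⟩⟩
  have h := tendsto_setIntegral_of_antitone
    (fun K => (Finset.measurableSet_biUnion _ fun k _ => hAm k).compl) hanti ⟨0, hg.integrableOn⟩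
  rw [hempty, Measure.restrict_empty, integral_zero_measure] at h
  exact (h.eventually (eventually_le_nhds hε)).exists

theorem abs_setIntegral_sub_riemannSum_le [IsFiniteMeasure μ] (hAd : Pairwise (Disjoint on A))
    (hAm : ∀ k, MeasurableSet (A k)) (hF : Integrable F μ)
    (hosc : ∀ k, ∀ x ∈ A k, |F x - F (e k)| ≤ ε) :
    |∫ x in ⋃ k ∈ Finset.range K, A k, F x ∂μ - riemannSum μ e A K F|
      ≤ ε * μ.real (⋃ k ∈ Finset.range K, A k) := by
  rw [integral_biUnion_finset _ (fun k _ => hAm k) (hAd.set_pairwise _)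
      fun k _ => hF.integrableOn,
    measureReal_biUnion_finset (hAd.set_pairwise _) fun k _ => hAm k, Finset.mul_sum,
    riemannSum, ← Finset.sum_sub_distrib]
  refine (Finset.abs_sum_le_sum_abs _ _).trans (Finset.sum_le_sum fun k _ => ?_)
  have hconst : ∫ x in A k, F (e k) ∂μ = F (e k) * μ.real (A k) := by
    rw [setIntegral_const, smul_eq_mul, mul_comm]
  rw [← hconst, ← integral_sub hF.integrableOn (integrable_const _)]
  exact norm_setIntegral_le_of_norm_le_const (f := fun x => F x - F (e k)) (measure_lt_top μ _)
    fun x hx => hosc k x hx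

theorem abs_integral_sub_riemannSum_le [IsProbabilityMeasure μ] (hAd : Pairwise (Disjoint on A))
    (hAm : ∀ k, MeasurableSet (A k)) (hF : Integrable F μ) (hg : Integrable g μ)
    (hFg : ∀ x, |F x| ≤ g x) (hε : 0 ≤ ε) (hosc : ∀ k, ∀ x ∈ A k, |F x - F (e k)| ≤ ε) :
    |∫ x, F x ∂μ - riemannSum μ e A K F| ≤ ε + ∫ x in (⋃ k ∈ Finset.range K, A k)ᶜ, g x ∂μ := by
  set E := ⋃ k ∈ Finset.range K, A k
  have hin : |∫ x in E, F x ∂μ - riemannSum μ e A K F| ≤ ε :=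
    (abs_setIntegral_sub_riemannSum_le hAd hAm hF hosc).trans
      (mul_le_of_le_one_right hε measureReal_le_one)
  have hout : |∫ x in Eᶜ, F x ∂μ| ≤ ∫ x in Eᶜ, g x ∂μ := by
    simpa only [Real.norm_eq_abs] using
      norm_integral_le_of_norm_le (f := F) hg.integrableOn (ae_of_all _ hFg)
  rw [← integral_add_compl (Finset.measurableSet_biUnion _ fun k _ => hAm k) hF, add_sub_right_comm]
  exact (abs_add_le _ _).trans (add_le_add hin hout)

theorem abs_riemannSum_sub_riemannSum_le (hFg : ∀ x, |F x| ≤ g x) :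
    |riemannSum μ e A K F - riemannSum ν e A K F|
      ≤ ∑ k ∈ Finset.range K, g (e k) * |μ.real (A k) - ν.real (A k)| := by
  rw [riemannSum, riemannSum, ← Finset.sum_sub_distrib]
  refine (Finset.abs_sum_le_sum_abs _ _).trans (Finset.sum_le_sum fun k _ => ?_)
  rw [← mul_sub, abs_mul]
  exact mul_le_mul_of_nonneg_right (hFg _) (abs_nonneg _)

variable [IsProbabilityMeasure μ] [IsProbabilityMeasure ν]

theorem setIntegral_compl_biUnion_range_le (hAd : Pairwise (Disjoint on A))
    (hAm : ∀ k, MeasurableSet (A k)) (hgμ : Integrable g μ) (hgν : Integrable g ν)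
    (hg0 : ∀ x, 0 ≤ g x) (hε : 0 ≤ ε) (hosc : ∀ k, ∀ x ∈ A k, |g x - g (e k)| ≤ ε) :
    ∫ x in (⋃ k ∈ Finset.range K, A k)ᶜ, g x ∂μ
      ≤ ∫ x in (⋃ k ∈ Finset.range K, A k)ᶜ, g x ∂ν + (∫ x, g x ∂μ - ∫ x, g x ∂ν)
        + ∑ k ∈ Finset.range K, g (e k) * |μ.real (A k) - ν.real (A k)| + 2 * ε := by
  have hE := Finset.measurableSet_biUnion (Finset.range K) fun k _ => hAm k
  have hμ := (abs_setIntegral_sub_riemannSum_le (K := K) hAd hAm hgμ hosc).trans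
    (mul_le_of_le_one_right hε measureReal_le_one)
  have hν := (abs_setIntegral_sub_riemannSum_le (K := K) hAd hAm hgν hosc).trans
    (mul_le_of_le_one_right hε measureReal_le_one)
  have hR := abs_riemannSum_sub_riemannSum_le (μ := μ) (ν := ν) (e := e) (A := A) (K := K)
    fun x => (abs_of_nonneg (hg0 x)).le
  have hsplitμ := integral_add_compl hE hgμ
  have hsplitν := integral_add_compl hE hgν
  linarith [(abs_le.1 hμ).1, (abs_le.1 hν).2, (abs_le.1 hR).1]

theorem abs_integral_sub_integral_le (hAd : Pairwise (Disjoint on A))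
    (hAm : ∀ k, MeasurableSet (A k)) (hFμ : Integrable F μ) (hFν : Integrable F ν)
    (hgμ : Integrable g μ) (hgν : Integrable g ν) (hg0 : ∀ x, 0 ≤ g x) (hFg : ∀ x, |F x| ≤ g x)
    (hε : 0 ≤ ε) (hoscF : ∀ k, ∀ x ∈ A k, |F x - F (e k)| ≤ ε)
    (hoscg : ∀ k, ∀ x ∈ A k, |g x - g (e k)| ≤ ε) :
    |∫ x, F x ∂μ - ∫ x, F x ∂ν|
      ≤ 4 * ε + 2 * ∫ x in (⋃ k ∈ Finset.range K, A k)ᶜ, g x ∂ν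
        + 2 * ∑ k ∈ Finset.range K, g (e k) * |μ.real (A k) - ν.real (A k)|
        + |∫ x, g x ∂μ - ∫ x, g x ∂ν| := by
  have hμ := abs_integral_sub_riemannSum_le (K := K) hAd hAm hFμ hgμ hFg hε hoscF
  have hν := abs_integral_sub_riemannSum_le (K := K) hAd hAm hFν hgν hFg hε hoscF
  have hR := abs_riemannSum_sub_riemannSum_le (μ := μ) (ν := ν) (e := e) (A := A) (K := K) hFg
  have htail := setIntegral_compl_biUnion_range_le (μ := μ) (ν := ν) (K := K) hAd hAm hgμ hgν hg0
    hε hoscg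
  rw [abs_le] at hμ hν hR ⊢
  constructor <;> linarith [le_abs_self (∫ x, g x ∂μ - ∫ x, g x ∂ν),
    neg_abs_le (∫ x, g x ∂μ - ∫ x, g x ∂ν)]

end RiemannSum

/-- **Lemma 3 (Ranga Rao).** Let `(S, d)` be a separable metric space, `ν, ν₁, ν₂, …`
probability measures on the Borel sets of `S` with `ν_n → ν` weakly. Let `𝓖` be a class of
real functions on `S` which is locally equicontinuous and dominated by a continuous `g ≥ 0`
with `∫ g dν_n → ∫ g dν < ∞`. Then `∫ f dν_n → ∫ f dν` uniformly in `f ∈ 𝓖`. -/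
theorem statement4
    {S : Type*} [MetricSpace S] [TopologicalSpace.SeparableSpace S]
    [MeasurableSpace S] [BorelSpace S]
    (ν : Measure S) (νn : ℕ → Measure S)
    [IsProbabilityMeasure ν] [∀ n, IsProbabilityMeasure (νn n)]
    (hweak : ∀ f : S →ᵇ ℝ,
      Tendsto (fun n => ∫ x, f x ∂(νn n)) atTop (𝓝 (∫ x, f x ∂ν)))
    (𝓖 : Set (S → ℝ))
    (hequi : ∀ ε > (0 : ℝ), ∀ x : S, ∃ δ > (0 : ℝ),
      ∀ y : S, dist x y ≤ δ → ∀ f ∈ 𝓖, |f x - f y| ≤ ε)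
    (g : S → ℝ) (hgcont : Continuous g) (hg0 : ∀ x, 0 ≤ g x)
    (hdom : ∀ f ∈ 𝓖, ∀ x, |f x| ≤ g x)
    (hgint : Integrable g ν) (hgintn : ∀ n, Integrable g (νn n))
    (hgconv : Tendsto (fun n => ∫ x, g x ∂(νn n)) atTop (𝓝 (∫ x, g x ∂ν))) :
    ∀ ε > (0 : ℝ), ∃ N : ℕ, ∀ n ≥ N, ∀ f ∈ 𝓖,
      |(∫ x, f x ∂(νn n)) - ∫ x, f x ∂ν| ≤ ε := by
  intro ε hε
  have : Nonempty S := nonempty_of_isProbabilityMeasure ν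
  obtain ⟨η, hη, rfl⟩ : ∃ η, 0 < η ∧ ε = 9 * η := ⟨ε / 9, by positivity, by ring⟩
  have h𝓗 := equicontinuous_insert_of_forall_abs_sub_le hequi hgcont
  obtain ⟨e, A, hAd, hAm, hAcov, hAν, hosc⟩ := h𝓗.exists_partition_null_frontier ν hη
  have hoscA : ∀ F ∈ insert g 𝓖, ∀ k, ∀ x ∈ A k, |F x - F (e k)| ≤ η :=
    fun F hF k x hx => (hosc ⟨F, hF⟩ k x hx).le
  obtain ⟨K, hK⟩ := exists_setIntegral_compl_biUnion_range_le hAm hAcov hgint hη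
  have hD := tendsto_sum_mul_abs_measureReal_sub_of_null_frontier hweak hAν (Finset.range K)
    (fun k => g (e k))
  obtain ⟨N, hN⟩ := eventually_atTop.1
    ((hD.eventually (eventually_le_nhds hη)).and (Metric.tendsto_nhds.1 hgconv η hη))
  refine ⟨N, fun n hn f hf => ?_⟩
  obtain ⟨hDn, hgn⟩ := hN n hn
  have hfcont := h𝓗.continuous_of_mem (mem_insert_of_mem g hf)
  have hfint : ∀ μ : Measure S, Integrable g μ → Integrable f μ := fun μ hg =>
    hg.mono' hfcont.aestronglyMeasurable (ae_of_all _ (hdom f hf))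
  have hbound := abs_integral_sub_integral_le (K := K) hAd hAm (hfint _ (hgintn n))
    (hfint _ hgint) (hgintn n) hgint hg0 (hdom f hf) hη.le (hoscA f (mem_insert_of_mem g hf))
    (hoscA g (mem_insert g 𝓖))
  rw [Real.dist_eq] at hgn
  linarith
end

section
/- Let 0 < α < 2, c > 0, and let μ, μ₁, μ₂, … ∈ S(α, c) with associated functions β, β₁, β₂, …. Assume that μ_n → μ in distribution (weakly) and that β_n(t) → 0 as t → 0 uniformly in n (i.e. sup_n sup_{0<|t|≤1/m} |β_n(t)| → 0 as m → ∞). Then ρ(μ_n, μ) → 0 as n → ∞. -/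
/-!
With `φ(t) = ∫ cos(t x)`, the real part of the characteristic function, one has
`1 - φₙ(h) = (c - βₙ(h))|h|^α`, which is small for small `h` uniformly in `n`. The increment
inequality `|φ(s) - φ(t)| ≤ ε + (2/ε)(1 - φ(s - t))` turns this into equicontinuity of `(φₙ)`,
so the pointwise convergence `φₙ → φ` given by weak convergence is uniform on compact sets.
Dividing `φₙ - φ = (βₙ - β)|t|^α` by `|t|^α` away from `0`, where `βₙ` and `β` are uniformly
small, gives `βₙ → β` uniformly on compact sets. Finally `|βₙ - β| ≤ 4` for `|t| ≥ 1`, so the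
series defining `ρ` is dominated by `∑ 4 · 2⁻ᵏ` and `ρ(μₙ, μ) → 0` term by term.
-/

open MeasureTheory Filter Finset
open scoped Topology BoundedContinuousFunction ENNReal

theorem Real.abs_cos_sub_cos_le_add_one_sub_cos {ε : ℝ} (hε : 0 < ε) (a b : ℝ) :
    |Real.cos a - Real.cos b| ≤ ε + 2 / ε * (1 - Real.cos (a - b)) := by
  have hcos : 1 - Real.cos (a - b) = 2 * Real.sin ((a - b) / 2) ^ 2 := by
    rw [show a - b = 2 * ((a - b) / 2) by ring, Real.cos_two_mul, Real.cos_sq']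
    ring_nf
  set u := Real.sin ((a - b) / 2)
  have hsub : |Real.cos a - Real.cos b| ≤ 2 * |u| := by
    rw [Real.cos_sub_cos, abs_mul, abs_mul]
    rw [abs_neg, abs_two]
    nlinarith [abs_nonneg u, Real.abs_sin_le_one ((a + b) / 2)]
  -- AM-GM: `2|u| ≤ ε + 4u²/ε`
  have hamgm : 2 * |u| ≤ ε + 2 / ε * (2 * u ^ 2) := by
    rw [div_mul_eq_mul_div, ← sub_le_iff_le_add', le_div_iff₀ hε]
    nlinarith [sq_nonneg (ε - 2 * |u|), sq_abs u]
  rw [hcos]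
  exact hsub.trans hamgm

theorem Equicontinuous.tendstoUniformlyOn_of_tendsto {ι X α : Type*} [TopologicalSpace X]
    [UniformSpace α] {F : ι → X → α} {f : X → α} {p : Filter ι} {K : Set X}
    (hF : Equicontinuous F) (hK : IsCompact K) (h : ∀ x ∈ K, Tendsto (F · x) p (𝓝 (f x))) :
    TendstoUniformlyOn F f p K := by
  have hpi : Tendsto ((⋃₀ {K}).domRestrict ∘ F) p (𝓝 ((⋃₀ {K}).domRestrict f)) :=
    tendsto_pi_nhds.mpr fun x => h x (by simpa using x.2)
  have := (EquicontinuousOn.tendsto_uniformOnFun_iff_pi' (𝔖 := {K}) (by simpa)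
    (by simpa using hF.equicontinuousOn K) p f).mpr hpi
  exact UniformOnFun.tendsto_iff_tendstoUniformlyOn.mp this K rfl

theorem tendsto_iSup_abs_sub_of_tendstoUniformlyOn {ι X : Type*} {p : Filter ι} {P : X → Prop}
    {f : ι → X → ℝ} {g : X → ℝ} (h : TendstoUniformlyOn f g p {x | P x}) :
    Tendsto (fun i => ⨆ x : {x // P x}, |f i x - g x|) p (𝓝 0) := by
  rw [Metric.tendstoUniformlyOn_iff] at h
  rw [Metric.tendsto_nhds]
  intro ε hε
  filter_upwards [h (ε / 2) (half_pos hε)] with i hi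
  rw [Real.dist_eq, sub_zero, abs_of_nonneg (Real.iSup_nonneg fun _ => abs_nonneg _)]
  refine (Real.iSup_le (fun x => ?_) (half_pos hε).le).trans_lt (half_lt_self hε)
  rw [abs_sub_comm]
  exact (hi x x.2).le

noncomputable def charFnRe (ν : Measure ℝ) (t : ℝ) : ℝ :=
  ∫ x, Real.cos (t * x) ∂ν

section charFnRe

variable {ν : Measure ℝ}

theorem charFnRe_eq_re_charFn [IsFiniteMeasure ν] (t : ℝ) : charFnRe ν t = (charFn ν t).re := by
  have hexp (x : ℝ) : Complex.I * (t * x) = (t * x : ℝ) * Complex.I := by push_cast; ring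
  have hint : Integrable (fun x : ℝ => Complex.exp (Complex.I * (t * x))) ν := by
    refine (integrable_const (1 : ℝ)).mono' (by fun_prop) (.of_forall fun x => ?_)
    rw [hexp, Complex.norm_exp_ofReal_mul_I]
  rw [charFn, ← RCLike.re_to_complex, ← integral_re hint]
  refine integral_congr_ae (.of_forall fun x => ?_)
  simp only [RCLike.re_to_complex, hexp, Complex.exp_ofReal_mul_I_re]

theorem integrable_cos_mul [IsFiniteMeasure ν] (t : ℝ) :
    Integrable (fun x => Real.cos (t * x)) ν :=
  (integrable_const (1 : ℝ)).mono' (by fun_prop)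
    (.of_forall fun x => (Real.norm_eq_abs _).trans_le (Real.abs_cos_le_one _))

theorem charFnRe_zero [IsProbabilityMeasure ν] : charFnRe ν 0 = 1 := by
  simp [charFnRe]

theorem abs_charFnRe_le_one [IsProbabilityMeasure ν] (t : ℝ) : |charFnRe ν t| ≤ 1 := by
  simpa [charFnRe] using norm_integral_le_of_norm_le_const (μ := ν) (C := 1)
    (.of_forall fun x => (Real.norm_eq_abs _).trans_le (Real.abs_cos_le_one (t * x)))

theorem abs_charFnRe_sub_le [IsProbabilityMeasure ν] {ε : ℝ} (hε : 0 < ε) (s t : ℝ) :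
    |charFnRe ν s - charFnRe ν t| ≤ ε + 2 / ε * (1 - charFnRe ν (s - t)) := by
  have hint : Integrable (fun x => 2 / ε * (1 - Real.cos ((s - t) * x))) ν :=
    ((integrable_const _).sub (integrable_cos_mul _)).const_mul _
  calc |charFnRe ν s - charFnRe ν t|
      = ‖∫ x, (Real.cos (s * x) - Real.cos (t * x)) ∂ν‖ := by
        rw [charFnRe, charFnRe, ← integral_sub (integrable_cos_mul _) (integrable_cos_mul _),
          Real.norm_eq_abs]
    _ ≤ ∫ x, (ε + 2 / ε * (1 - Real.cos ((s - t) * x))) ∂ν := by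
        refine norm_integral_le_of_norm_le ((integrable_const _).add hint)
          (.of_forall fun x => ?_)
        rw [Real.norm_eq_abs, sub_mul]
        exact Real.abs_cos_sub_cos_le_add_one_sub_cos hε _ _
    _ = ε + 2 / ε * (1 - charFnRe ν (s - t)) := by
        rw [integral_add (integrable_const _) hint, integral_const_mul,
          integral_sub (integrable_const _) (integrable_cos_mul _)]
        simp [charFnRe]

theorem equicontinuous_charFnRe {ι : Type*} {ν : ι → Measure ℝ} [∀ i, IsProbabilityMeasure (ν i)]
    (h : EquicontinuousAt (fun i => charFnRe (ν i)) 0) :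
    Equicontinuous (fun i => charFnRe (ν i)) := by
  intro t₀
  rw [Metric.equicontinuousAt_iff_right] at h ⊢
  intro ε hε
  have hshift : Tendsto (fun t => t - t₀) (𝓝 t₀) (𝓝 0) := by
    simpa using (tendsto_id (x := 𝓝 t₀)).sub_const t₀
  filter_upwards [hshift.eventually (h (ε ^ 2 / 8) (by positivity))] with t ht i
  have hsmall : 1 - charFnRe (ν i) (t - t₀) < ε ^ 2 / 8 := by
    simpa [charFnRe_zero, Real.dist_eq] using (le_abs_self _).trans_lt (ht i)
  have hincr := abs_charFnRe_sub_le (ν := ν i) (half_pos hε) t t₀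
  have hdefect : 2 / (ε / 2) * (1 - charFnRe (ν i) (t - t₀)) < ε / 2 := by
    calc 2 / (ε / 2) * (1 - charFnRe (ν i) (t - t₀)) < 2 / (ε / 2) * (ε ^ 2 / 8) := by gcongr
      _ = ε / 2 := by field_simp; ring
  rw [dist_comm, Real.dist_eq]
  linarith

end charFnRe

theorem tendsto_charFnRe_of_tendsto_integral {ι : Type*} {p : Filter ι} {ν : ι → Measure ℝ}
    {ν₀ : Measure ℝ}
    (h : ∀ f : ℝ →ᵇ ℝ, Tendsto (fun i => ∫ x, f x ∂(ν i)) p (𝓝 (∫ x, f x ∂ν₀))) (t : ℝ) :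
    Tendsto (fun i => charFnRe (ν i) t) p (𝓝 (charFnRe ν₀ t)) :=
  h (.ofNormedAddCommGroup (fun x => Real.cos (t * x)) (by fun_prop) 1
    fun x => (Real.norm_eq_abs _).trans_le (Real.abs_cos_le_one _))

section IsAssocFn

variable {α c : ℝ} {ν : Measure ℝ} {β : ℝ → ℝ}

theorem IsAssocFn.charFnRe_eq [IsFiniteMeasure ν] (h : IsAssocFn α c ν β) (t : ℝ) :
    charFnRe ν t = 1 - c * |t| ^ α + β t * |t| ^ α := by
  rw [charFnRe_eq_re_charFn, h.eq, Complex.ofReal_re]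

theorem IsAssocFn.abs_sub_le_two [IsProbabilityMeasure ν] (hα : 0 ≤ α) (h : IsAssocFn α c ν β)
    {t : ℝ} (ht : 1 ≤ |t|) : |β t - c| ≤ 2 := by
  have hpow : 1 ≤ |t| ^ α := Real.one_le_rpow ht hα
  have hφ : (β t - c) * |t| ^ α = charFnRe ν t - 1 := by rw [h.charFnRe_eq]; ring
  calc |β t - c| ≤ |β t - c| * |t| ^ α := le_mul_of_one_le_right (abs_nonneg _) hpow
    _ = |charFnRe ν t - 1| := by
        rw [← hφ, abs_mul, abs_of_nonneg (Real.rpow_nonneg (abs_nonneg t) α)]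
    _ ≤ |charFnRe ν t| + |1| := abs_sub _ _
    _ ≤ 2 := by rw [abs_one]; linarith [abs_charFnRe_le_one (ν := ν) t]

theorem IsAssocFn.equicontinuousAt_charFnRe {ι : Type*} {ν : ι → Measure ℝ}
    [∀ i, IsProbabilityMeasure (ν i)] {β : ι → ℝ → ℝ} (hα : 0 < α)
    (h : ∀ i, IsAssocFn α c (ν i) (β i))
    (hunif : ∀ ε > (0 : ℝ), ∃ δ > (0 : ℝ), ∀ i, ∀ t : ℝ, |t| ≤ δ → |β i t| ≤ ε) :
    EquicontinuousAt (fun i => charFnRe (ν i)) 0 := by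
  rw [Metric.equicontinuousAt_iff_right]
  intro ε hε
  obtain ⟨δ, hδ, hβ⟩ := hunif 1 one_pos
  have hpow : Tendsto (fun t : ℝ => (|c| + 1) * |t| ^ α) (𝓝 0) (𝓝 0) := by
    have := ((continuous_abs.rpow_const fun _ => Or.inr hα.le).tendsto 0).const_mul (|c| + 1)
    simpa [Real.zero_rpow hα.ne'] using this
  filter_upwards [hpow.eventually (gt_mem_nhds hε), Metric.closedBall_mem_nhds 0 hδ] with t hlt ht i
  rw [Metric.mem_closedBall, dist_zero_right, Real.norm_eq_abs] at ht
  rw [charFnRe_zero, (h i).charFnRe_eq, Real.dist_eq,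
    show 1 - (1 - c * |t| ^ α + β i t * |t| ^ α) = (c - β i t) * |t| ^ α by ring,
    abs_mul, abs_of_nonneg (Real.rpow_nonneg (abs_nonneg t) α)]
  calc |c - β i t| * |t| ^ α ≤ (|c| + 1) * |t| ^ α := by
        gcongr
        exact (abs_sub _ _).trans (add_le_add le_rfl (hβ i t ht))
    _ < ε := hlt

theorem IsAssocFn.tendstoUniformlyOn {ι : Type*} {p : Filter ι} {S : Set ℝ}
    {νn : ι → Measure ℝ} [IsFiniteMeasure ν] [∀ i, IsFiniteMeasure (νn i)] {βn : ι → ℝ → ℝ}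
    (hα : 0 < α) (hν : IsAssocFn α c ν β) (hνn : ∀ i, IsAssocFn α c (νn i) (βn i))
    (hunif : ∀ ε > (0 : ℝ), ∃ δ > (0 : ℝ), ∀ i, ∀ t : ℝ, |t| ≤ δ → |βn i t| ≤ ε)
    (h : TendstoUniformlyOn (fun i => charFnRe (νn i)) (charFnRe ν) p S) :
    TendstoUniformlyOn βn β p S := by
  rw [Metric.tendstoUniformlyOn_iff] at h ⊢
  intro ε hε
  obtain ⟨δ₁, hδ₁, hβn⟩ := hunif (ε / 3) (by positivity)
  obtain ⟨δ₂, hδ₂, hβ⟩ := Metric.continuousAt_iff.mp (hν.continuous.continuousAt (x := 0)) (ε / 3)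
    (by positivity)
  set δ := min δ₁ δ₂
  have hδ : 0 < δ := lt_min hδ₁ hδ₂
  filter_upwards [h (ε * δ ^ α) (by positivity)] with i hi t ht
  have hdist : dist (β t) (βn i t) * |t| ^ α = dist (charFnRe ν t) (charFnRe (νn i) t) := by
    have hpow := Real.rpow_nonneg (abs_nonneg t) α
    rw [Real.dist_eq, Real.dist_eq, hν.charFnRe_eq, (hνn i).charFnRe_eq,
      ← abs_of_nonneg hpow, ← abs_mul, abs_of_nonneg hpow]
    ring_nf
  rcases lt_or_ge |t| δ with hsmall | hlarge
  · have h1 : |β t| < ε / 3 := by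
      simpa [hν.zero] using hβ (x := t) (by simpa using hsmall.trans_le (min_le_right _ _))
    have h2 := hβn i t (hsmall.le.trans (min_le_left _ _))
    rw [Real.dist_eq]
    linarith [abs_sub (β t) (βn i t)]
  · have hpos : 0 < |t| ^ α := Real.rpow_pos_of_pos (hδ.trans_le hlarge) α
    refine lt_of_mul_lt_mul_right ((hdist ▸ hi t ht).trans_le ?_) hpos.le
    gcongr

end IsAssocFn

theorem tendsto_rho_of_tendstoUniformlyOn {ι : Type*} {p : Filter ι} {βn : ι → ℝ → ℝ}
    {β : ℝ → ℝ} {M : ℝ} (hM : ∀ i t, 1 ≤ |t| → |βn i t - β t| ≤ M)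
    (h : ∀ R, TendstoUniformlyOn βn β p (Metric.closedBall 0 R)) :
    Tendsto (fun i => rho (βn i) β) p (𝓝 0) := by
  set band : ι → ℕ → ℝ := fun i k =>
    ⨆ t : {t : ℝ // 2 ^ k ≤ |t| ∧ |t| ≤ 2 ^ (k + 1)}, |βn i t.1 - β t.1|
  have hband_nonneg (i : ι) (k : ℕ) : 0 ≤ band i k := Real.iSup_nonneg fun _ => abs_nonneg _
  have hband_le (i : ι) (k : ℕ) : band i k ≤ M :=
    Real.iSup_le (fun t => hM i t ((one_le_pow₀ one_le_two).trans t.2.1))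
      ((abs_nonneg _).trans (hM i 1 (by simp)))
  have hterm (k : ℕ) : Tendsto (fun i => (2 ^ k : ℝ)⁻¹ * band i k) p (𝓝 0) := by
    simpa using (tendsto_iSup_abs_sub_of_tendstoUniformlyOn
      ((h _).mono fun t ht => by simpa using ht.2)).const_mul (2 ^ k : ℝ)⁻¹
  have hseries : Tendsto (fun i => ∑' k : ℕ, (2 ^ k : ℝ)⁻¹ * band i k) p (𝓝 0) := by
    simpa using tendsto_tsum_of_dominated_convergence (f := fun i k => (2 ^ k : ℝ)⁻¹ * band i k)
      (bound := fun k => M * 2⁻¹ ^ k)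
      ((summable_geometric_of_lt_one (by norm_num) (by norm_num)).mul_left M) hterm
      (.of_forall fun i k => by
        rw [Real.norm_of_nonneg (mul_nonneg (by positivity) (hband_nonneg i k)), inv_pow, mul_comm]
        exact mul_le_mul_of_nonneg_right (hband_le i k) (by positivity))
  have hcentre := tendsto_iSup_abs_sub_of_tendstoUniformlyOn
    ((h 1).mono fun t (ht : |t| ≤ 1) => by simpa using ht)
  rw [← add_zero (0 : ℝ)]
  exact hcentre.add hseries

theorem statement7_general
    (α c : ℝ) (hα : 0 < α)
    (μ : Measure ℝ) (μn : ℕ → Measure ℝ) (β : ℝ → ℝ) (βn : ℕ → ℝ → ℝ)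
    (hμ : MemS α c μ) (hμn : ∀ n, MemS α c (μn n))
    (hβ : IsAssocFn α c μ β) (hβn : ∀ n, IsAssocFn α c (μn n) (βn n))
    (hweak : ∀ f : ℝ →ᵇ ℝ, Tendsto (fun n => ∫ x, f x ∂(μn n)) atTop (𝓝 (∫ x, f x ∂μ)))
    (hunif : ∀ ε > (0 : ℝ), ∃ δ > (0 : ℝ), ∀ n : ℕ, ∀ t : ℝ, |t| ≤ δ → |βn n t| ≤ ε) :
    Tendsto (fun n => rho (βn n) β) atTop (𝓝 0) := by
  have := hμ.1
  have (n : ℕ) : IsProbabilityMeasure (μn n) := (hμn n).1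
  have hequi : Equicontinuous fun n => charFnRe (μn n) :=
    equicontinuous_charFnRe (IsAssocFn.equicontinuousAt_charFnRe hα hβn hunif)
  refine tendsto_rho_of_tendstoUniformlyOn (M := 2 + 2) (fun n t ht => ?_) fun R => ?_
  · calc |βn n t - β t| ≤ |βn n t - c| + |c - β t| := abs_sub_le _ _ _
      _ ≤ 2 + 2 := by
        rw [abs_sub_comm c]
        exact add_le_add ((hβn n).abs_sub_le_two hα.le ht) (hβ.abs_sub_le_two hα.le ht)
  · exact hβ.tendstoUniformlyOn hα hβn hunif (hequi.tendstoUniformlyOn_of_tendsto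
      (isCompact_closedBall 0 R) fun t _ => tendsto_charFnRe_of_tendsto_integral hweak t)

/-- If `μ, μ₁, μ₂, … ∈ S(α, c)`, `μ_n → μ` in distribution, and `β_n(t) → 0` as `t → 0`
uniformly in `n`, then `ρ(μ_n, μ) → 0`. -/
theorem statement7
    (α c : ℝ) (hα : 0 < α) (hα2 : α < 2) (hc : 0 < c)
    (μ : Measure ℝ) (μn : ℕ → Measure ℝ) (β : ℝ → ℝ) (βn : ℕ → ℝ → ℝ)
    (hμ : MemS α c μ) (hμn : ∀ n, MemS α c (μn n))
    (hβ : IsAssocFn α c μ β) (hβn : ∀ n, IsAssocFn α c (μn n) (βn n))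
    (hweak : ∀ f : ℝ →ᵇ ℝ, Tendsto (fun n => ∫ x, f x ∂(μn n)) atTop (𝓝 (∫ x, f x ∂μ)))
    (hunif : ∀ ε > (0 : ℝ), ∃ δ > (0 : ℝ), ∀ n : ℕ, ∀ t : ℝ, |t| ≤ δ → |βn n t| ≤ ε) :
    Tendsto (fun n => rho (βn n) β) atTop (𝓝 0) :=
  statement7_general α c hα μ μn β βn hμ hμn hβ hβn hweak hunif
end

section
/- Let 0 < α < 2, c > 0, let (Ω, 𝓕, P) be a probability space, and let μ be a measurable map from Ω to the space of probability measures on ℝ such that μ(ω) ∈ S(α, c) for every ω, with characteristic functions φ_ω(t) = 1 − c|t|^α + β(t, ω)|t|^α, and assume β(t, ω) → 0 as t → 0 uniformly in ω ∈ Ω. Then for every fixed t ∈ ℝ there exist δ₀ > 0 and c₀ > 0 such that for all N ≥ 1 and all (a₁, …, a_N) ∈ ℝ^N with max_{1≤k≤N} |a_k| ≤ δ₀ · A_N, where A_N = (Σ_{k=1}^N |a_k|^α)^{1/α}, one has ∫_Ω Π_{k=1}^N φ_ω(t a_k / A_N) dP(ω) ≥ c₀. -/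
open MeasureTheory Filter Finset
open scoped Topology BoundedContinuousFunction ENNReal

/-!
Put `s_k = t a_k / A_N`, so that `∑ |s_k|^α ≤ |t|^α`. Choose `r > 0` so small that
`|β(s, ω)| ≤ c / 2` and `3c|s|^α ≤ 1` whenever `|s| ≤ r`; the condition `max |a_k| ≤ δ₀ A_N` with
`δ₀ = r / (|t| + 1)` gives `|s_k| ≤ r`. Then each factor `φ_ω(s_k)` is real and lies in
`[exp(-3c|s_k|^α), 1]`, so the product is at least `exp(-3c|t|^α)` for every `ω`, and so is its
integral.
-/

namespace Real

lemma exp_neg_le_one_sub_div_two {y : ℝ} (h0 : 0 ≤ y) (h1 : y ≤ 1) : exp (-y) ≤ 1 - y / 2 := by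
  have h : exp (-y) * exp y = 1 := by rw [← exp_add]; simp
  nlinarith [add_one_le_exp y, exp_pos (-y)]

lemma exp_neg_sum_le_prod {ι : Type*} (s : Finset ι) {x f : ι → ℝ}
    (h : ∀ i ∈ s, exp (-x i) ≤ f i) : exp (-∑ i ∈ s, x i) ≤ ∏ i ∈ s, f i := by
  rw [← sum_neg_distrib, exp_sum]
  exact prod_le_prod (fun i _ => (exp_pos _).le) h

lemma mul_rpow_le_one_of_abs_le {C α s : ℝ} (hC : 0 < C) (hα : 0 < α)
    (hs : |s| ≤ C⁻¹ ^ α⁻¹) : C * |s| ^ α ≤ 1 := by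
  have h : |s| ^ α ≤ C⁻¹ := by
    simpa only [rpow_inv_rpow (inv_nonneg.mpr hC.le) hα.ne'] using
      rpow_le_rpow (abs_nonneg s) hs hα.le
  calc C * |s| ^ α ≤ C * C⁻¹ := by gcongr
    _ = 1 := mul_inv_cancel₀ hC.ne'

end Real

open Real

lemma one_sub_mul_add_mul_mem_Icc {b c y : ℝ} (hy : 0 ≤ y) (hb : |b| ≤ c / 2)
    (hcy : 3 * c * y ≤ 1) : 1 - c * y + b * y ∈ Set.Icc (exp (-(3 * c * y))) 1 := by
  have hc : 0 ≤ c := by linarith [abs_nonneg b]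
  obtain ⟨hb₁, hb₂⟩ := abs_le.mp hb
  have hexp := exp_neg_le_one_sub_div_two (by positivity) hcy
  constructor <;> nlinarith

lemma prod_one_sub_mul_add_mul_mem_Icc {ι : Type*} (S : Finset ι) {b y : ι → ℝ} {c T : ℝ}
    (hc : 0 ≤ c) (hy : ∀ i ∈ S, 0 ≤ y i) (hb : ∀ i ∈ S, |b i| ≤ c / 2)
    (hcy : ∀ i ∈ S, 3 * c * y i ≤ 1) (hT : ∑ i ∈ S, y i ≤ T) :
    ∏ i ∈ S, (1 - c * y i + b i * y i) ∈ Set.Icc (exp (-(3 * c * T))) 1 := by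
  have hfac i (hi : i ∈ S) := one_sub_mul_add_mul_mem_Icc (hy i hi) (hb i hi) (hcy i hi)
  constructor
  · calc exp (-(3 * c * T)) ≤ exp (-∑ i ∈ S, 3 * c * y i) := by
          rw [← mul_sum]
          gcongr
      _ ≤ _ := exp_neg_sum_le_prod S fun i hi => (hfac i hi).1
  · exact prod_le_one (fun i hi => (exp_pos _).le.trans (hfac i hi).1) fun i hi => (hfac i hi).2

lemma wA_nonneg (α : ℝ) (a : ℕ → ℝ) (N : ℕ) : 0 ≤ wA α a N :=
  rpow_nonneg (sum_nonneg fun _ _ => rpow_nonneg (abs_nonneg _) _) _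

lemma wA_rpow {α : ℝ} (hα : α ≠ 0) (a : ℕ → ℝ) (N : ℕ) :
    wA α a N ^ α = ∑ k ∈ range N, |a k| ^ α := by
  rw [wA, one_div, rpow_inv_rpow (sum_nonneg fun _ _ => rpow_nonneg (abs_nonneg _) _) hα]

lemma abs_mul_div_wA_le {α δ₀ : ℝ} (hδ₀ : 0 ≤ δ₀) (t : ℝ) {a : ℕ → ℝ} {N k : ℕ}
    (ha : |a k| ≤ δ₀ * wA α a N) : |t * a k / wA α a N| ≤ |t| * δ₀ := by
  have hA := wA_nonneg α a N
  rw [abs_div, abs_mul, abs_of_nonneg hA]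
  refine div_le_of_le_mul₀ hA (by positivity) ?_
  rw [mul_assoc]
  exact mul_le_mul_of_nonneg_left ha (abs_nonneg t)

lemma sum_abs_mul_div_wA_rpow_le {α : ℝ} (hα : 0 < α) (t : ℝ) (a : ℕ → ℝ) (N : ℕ) :
    ∑ k ∈ range N, |t * a k / wA α a N| ^ α ≤ |t| ^ α := by
  have hA := wA_nonneg α a N
  have hterm : ∀ k, |t * a k / wA α a N| ^ α = |t| ^ α * (|a k| ^ α / wA α a N ^ α) := by
    intro k
    rw [abs_div, abs_mul, abs_of_nonneg hA, div_rpow (by positivity) hA,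
      mul_rpow (abs_nonneg _) (abs_nonneg _), mul_div_assoc]
  simp only [hterm, ← mul_sum, ← sum_div, ← wA_rpow hα.ne']
  exact mul_le_of_le_one_right (rpow_nonneg (abs_nonneg t) _) (div_self_le_one _)

lemma stronglyMeasurable_charFn {Ω : Type*} [MeasurableSpace Ω] {μ : Ω → Measure ℝ}
    (hμ : Measurable μ) (u : ℝ) : StronglyMeasurable fun ω => charFn (μ ω) u :=
  StronglyMeasurable.integral_kernel (κ := ⟨μ, hμ⟩)
    (by fun_prop : Continuous fun x : ℝ => Complex.exp (Complex.I * (u * x))).stronglyMeasurable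

lemma le_integral_of_forall_le_of_le {Ω : Type*} [MeasurableSpace Ω] {P : Measure Ω}
    [IsProbabilityMeasure P] {g : Ω → ℝ} {m M : ℝ} (hg : AEStronglyMeasurable g P)
    (hm : ∀ ω, m ≤ g ω) (hM : ∀ ω, g ω ≤ M) : m ≤ ∫ ω, g ω ∂P := by
  have hint : Integrable g P :=
    .of_bound hg (max |m| |M|) (.of_forall fun ω => abs_le_max_abs_abs (hm ω) (hM ω))
  calc m = ∫ _, m ∂P := by simp
    _ ≤ ∫ ω, g ω ∂P := integral_mono (integrable_const m) hint hm

theorem statement12_general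
    {Ω : Type*} [MeasurableSpace Ω] (P : Measure Ω) [IsProbabilityMeasure P]
    (α c : ℝ) (hα : 0 < α) (hc : 0 < c)
    (μ : Ω → Measure ℝ)
    (hμmeas : ∀ s : Set ℝ, MeasurableSet s → Measurable fun ω => μ ω s)
    (β : ℝ → Ω → ℝ)
    (hβeq : ∀ ω, ∀ s : ℝ, charFn (μ ω) s = ((1 - c * |s| ^ α + β s ω * |s| ^ α : ℝ) : ℂ))
    (hβunif : ∀ ε > (0 : ℝ), ∃ δ > (0 : ℝ), ∀ ω, ∀ s : ℝ, |s| ≤ δ → |β s ω| ≤ ε)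
    (t : ℝ) :
    ∃ δ₀ > (0 : ℝ), ∃ c₀ > (0 : ℝ), ∀ N : ℕ, 1 ≤ N → ∀ a : ℕ → ℝ,
      (∀ k < N, |a k| ≤ δ₀ * wA α a N) →
      c₀ ≤ (∫ ω, (∏ k ∈ Finset.range N, charFn (μ ω) (t * a k / wA α a N)) ∂P).re := by
  obtain ⟨δ, hδ, hβδ⟩ := hβunif (c / 2) (by positivity)
  set r := min δ ((3 * c)⁻¹ ^ α⁻¹)
  have hr : 0 < r := lt_min hδ (by positivity)
  refine ⟨r / (|t| + 1), by positivity, exp (-(3 * c * |t| ^ α)), exp_pos _, fun N _ a ha => ?_⟩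
  set s : ℕ → ℝ := fun k => t * a k / wA α a N
  have hs : ∀ k ∈ range N, |s k| ≤ r := by
    have htr : |t| * (r / (|t| + 1)) ≤ r := by
      rw [mul_div_left_comm]
      exact mul_le_of_le_one_right hr.le ((div_le_one (by positivity)).mpr (by linarith))
    exact fun k hk => (abs_mul_div_wA_le (by positivity) t (ha k (mem_range.mp hk))).trans htr
  set g : Ω → ℝ := fun ω => ∏ k ∈ range N, (1 - c * |s k| ^ α + β (s k) ω * |s k| ^ α)
  have hg ω : g ω ∈ Set.Icc (exp (-(3 * c * |t| ^ α))) 1 :=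
    prod_one_sub_mul_add_mul_mem_Icc _ hc.le (fun _ _ => rpow_nonneg (abs_nonneg _) _)
      (fun k hk => hβδ ω _ ((hs k hk).trans (min_le_left _ _)))
      (fun k hk => mul_rpow_le_one_of_abs_le (by positivity) hα
        ((hs k hk).trans (min_le_right _ _)))
      (sum_abs_mul_div_wA_rpow_le hα t a N)
  have hF ω : ∏ k ∈ range N, charFn (μ ω) (s k) = (g ω : ℂ) := by
    rw [Complex.ofReal_prod]
    exact prod_congr rfl fun k _ => hβeq ω (s k)
  have hg_meas : StronglyMeasurable g := by
    simpa only [hF, Complex.ofReal_re] using Complex.continuous_re.comp_stronglyMeasurable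
      (stronglyMeasurable_fun_prod (range N) fun k _ =>
        stronglyMeasurable_charFn (Measure.measurable_of_measurable_coe μ hμmeas) (s k))
  simp only [s, hF]
  rw [integral_complex_ofReal, Complex.ofReal_re]
  exact le_integral_of_forall_le_of_le hg_meas.aestronglyMeasurable (fun ω => (hg ω).1)
    fun ω => (hg ω).2

/-- Let `μ` be a random measure with `μ(ω) ∈ S(α, c)` for every `ω`, with characteristic
functions `φ_ω(t) = 1 - c|t|^α + β(t, ω)|t|^α` where `β(t, ω) → 0` as `t → 0` uniformly in
`ω`. Then for every fixed `t` there are `δ₀ > 0` and `c₀ > 0` such that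
`∫_Ω ∏_{k≤N} φ_ω(t a_k / A_N) dP(ω) ≥ c₀` whenever `max_{1≤k≤N} |a_k| ≤ δ₀ A_N`. -/
theorem statement12
    {Ω : Type*} [MeasurableSpace Ω] (P : Measure Ω) [IsProbabilityMeasure P]
    (α c : ℝ) (hα : 0 < α) (hα2 : α < 2) (hc : 0 < c)
    (μ : Ω → Measure ℝ)
    (hμmeas : ∀ s : Set ℝ, MeasurableSet s → Measurable fun ω => μ ω s)
    (hμS : ∀ ω, MemS α c (μ ω))
    (β : ℝ → Ω → ℝ)
    (hβeq : ∀ ω, ∀ s : ℝ, charFn (μ ω) s = ((1 - c * |s| ^ α + β s ω * |s| ^ α : ℝ) : ℂ))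
    (hβunif : ∀ ε > (0 : ℝ), ∃ δ > (0 : ℝ), ∀ ω, ∀ s : ℝ, |s| ≤ δ → |β s ω| ≤ ε)
    (t : ℝ) :
    ∃ δ₀ > (0 : ℝ), ∃ c₀ > (0 : ℝ), ∀ N : ℕ, 1 ≤ N → ∀ a : ℕ → ℝ,
      (∀ k < N, |a k| ≤ δ₀ * wA α a N) →
      c₀ ≤ (∫ ω, (∏ k ∈ Finset.range N, charFn (μ ω) (t * a k / wA α a N)) ∂P).re :=
  statement12_general P α c hα hc μ hμmeas β hβeq hβunif t
end

section
/- Let (X_n) be a determining sequence of random variables on a probability space (Ω, 𝓕, P) with limit random measure μ. Then for every measurable A ⊂ Ω with P(A) > 0 and every continuity point t of the limiting distribution function F_A, one has F_A(t) = E_A[μ(−∞, t)] = (1/P(A)) ∫_A μ(ω)(−∞, t) dP(ω). -/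
/- Let `G = F_Ω` and `L(s) = ∫_A μ(-∞, s] dP`. Testing the weak `L^∞` convergence against `1_A`
gives `P(A ∩ {X_n ≤ s}) → L(s)` at continuity points of `G`, while by definition of `F_A`,
`P(A ∩ {X_n < s}) → F_A(s) P(A)` at continuity points of `F_A`. Since
`{X_n ≤ s} ⊆ {X_n < s'} ⊆ {X_n ≤ s'}` for `s < s'`, the two limits interleave:
`L(s) ≤ F_A(s') P(A) ≤ L(s')` along the dense sets of continuity points. Letting `s, s' ↑ t`,
`L(s) → ∫_A μ(-∞, t) dP` by dominated convergence, while `F_A(s') → F_A(t)` by continuity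
of `F_A` at `t`. -/

open MeasureTheory Filter Finset
open scoped Topology BoundedContinuousFunction ENNReal

open Set ProbabilityTheory

theorem Monotone.dense_setOf_continuousAt {F : ℝ → ℝ} (hF : Monotone F) :
    Dense {x | ContinuousAt F x} := by
  simpa only [compl_ofPred, not_not] using hF.countable_not_continuousAt.dense_compl ℝ

theorem Dense.frequently_nhdsLT {s : Set ℝ} (hs : Dense s) (t : ℝ) :
    ∃ᶠ x in 𝓝[<] t, x ∈ s := by
  rw [Filter.frequently_iff]
  intro U hU
  obtain ⟨a, hat, haU⟩ := mem_nhdsLT_iff_exists_Ioo_subset.1 hU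
  obtain ⟨x, hxs, hax, hxt⟩ := hs.exists_between hat
  exact ⟨x, haU ⟨hax, hxt⟩, hxs⟩

theorem tendsto_measureReal_Iic_nhdsLT (ν : Measure ℝ) [IsProbabilityMeasure ν] (t : ℝ) :
    Tendsto (fun s => ν.real (Iic s)) (𝓝[<] t) (𝓝 (ν.real (Iio t))) := by
  have hleft : ν (Iio t) = ENNReal.ofReal (Function.leftLim (cdf ν) t - 0) := by
    rw [← StieltjesFunction.measure_Iio _ (tendsto_cdf_atBot ν), measure_cdf]
  have hnonneg : 0 ≤ Function.leftLim (cdf ν) t :=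
    (cdf_nonneg ν (t - 1)).trans ((cdf ν).mono.le_leftLim (sub_one_lt t))
  rw [measureReal_def, hleft, sub_zero, ENNReal.toReal_ofReal hnonneg]
  exact ((cdf ν).mono.tendsto_leftLim t).congr (cdf_eq_real ν)

theorem integrable_measureReal {Ω : Type*} [MeasurableSpace Ω] (P : Measure Ω)
    [IsFiniteMeasure P] {μ : Ω → Measure ℝ} (hμ : ∀ ω, IsProbabilityMeasure (μ ω))
    {s : Set ℝ} (hs : Measurable fun ω => μ ω s) :
    Integrable (fun ω => (μ ω).real s) P :=
  .of_bound hs.ennreal_toReal.aestronglyMeasurable 1 <| ae_of_all _ fun _ => by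
    rw [Real.norm_of_nonneg measureReal_nonneg]
    exact measureReal_le_one

theorem tendsto_integral_measureReal_Iic_nhdsLT {Ω : Type*} [MeasurableSpace Ω]
    (P : Measure Ω) [IsFiniteMeasure P] {μ : Ω → Measure ℝ}
    (hμ : ∀ ω, IsProbabilityMeasure (μ ω))
    (hmeas : ∀ s, MeasurableSet s → Measurable fun ω => μ ω s) (t : ℝ) :
    Tendsto (fun s => ∫ ω, (μ ω).real (Iic s) ∂P) (𝓝[<] t)
      (𝓝 (∫ ω, (μ ω).real (Iio t) ∂P)) :=
  tendsto_integral_filter_of_dominated_convergence (fun _ => 1)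
    (Eventually.of_forall fun _ =>
      (integrable_measureReal P hμ (hmeas _ measurableSet_Iic)).aestronglyMeasurable)
    (Eventually.of_forall fun _ => ae_of_all _ fun _ => by
      rw [Real.norm_of_nonneg measureReal_nonneg]
      exact measureReal_le_one)
    (integrable_const 1) (ae_of_all _ fun ω => tendsto_measureReal_Iic_nhdsLT (μ ω) t)

theorem tendsto_measureReal_inter_of_weak {Ω : Type*} [MeasurableSpace Ω] {P : Measure Ω}
    [IsFiniteMeasure P] {E : ℕ → Set Ω} {f : Ω → ℝ} {A : Set Ω}
    (hE : ∀ n, MeasurableSet (E n)) (hA : MeasurableSet A)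
    (h : ∀ η : Ω → ℝ, Integrable η P →
      Tendsto (fun n => ∫ ω, (E n).indicator (fun _ => (1 : ℝ)) ω * η ω ∂P) atTop
        (𝓝 (∫ ω, f ω * η ω ∂P))) :
    Tendsto (fun n => P.real (A ∩ E n)) atTop (𝓝 (∫ ω in A, f ω ∂P)) := by
  have hlim := h _ ((integrable_const (1 : ℝ)).indicator hA)
  simp only [← indicator_mul_right, mul_one, integral_indicator hA] at hlim
  refine hlim.congr fun n => ?_
  rw [inter_comm, ← measureReal_restrict_apply (hE n)]
  exact integral_indicator_one (hE n)

theorem statement15_general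
    {Ω : Type*} [MeasurableSpace Ω] (P : Measure Ω) [IsProbabilityMeasure P]
    (X : ℕ → Ω → ℝ) (hXmeas : ∀ n, Measurable (X n)) (μ : Ω → Measure ℝ)
    (hlrm : IsLimitRandomMeasure P X μ)
    (A : Set Ω) (hA : MeasurableSet A) (hPA : P A ≠ 0)
    (F : ℝ → ℝ) (hF : IsDistFun F)
    (hFA : ∀ s : ℝ, ContinuousAt F s →
      Tendsto (fun n => (P (A ∩ {ω | X n ω < s})).toReal / (P A).toReal) atTop (𝓝 (F s)))
    (t : ℝ) (ht : ContinuousAt F t) :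
    F t = (1 / (P A).toReal) * ∫ ω in A, (μ ω (Set.Iio t)).toReal ∂P := by
  obtain ⟨hμ, hmeas, G, hG, -, hweak⟩ := hlrm
  have hp : 0 < P.real A := ENNReal.toReal_pos hPA (measure_ne_top P A)
  have hlimG (s : ℝ) (hs : ContinuousAt G s) :
      Tendsto (fun n => P.real (A ∩ {ω | X n ω ≤ s})) atTop
        (𝓝 (∫ ω in A, (μ ω).real (Iic s) ∂P)) :=
    tendsto_measureReal_inter_of_weak (fun n => hXmeas n measurableSet_Iic) hA (hweak s hs)
  have hlimF (s : ℝ) (hs : ContinuousAt F s) :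
      Tendsto (fun n => P.real (A ∩ {ω | X n ω < s})) atTop (𝓝 (F s * P.real A)) :=
    ((hFA s hs).mul_const _).congr fun n => div_mul_cancel₀ _ hp.ne'
  have upper : ∫ ω in A, (μ ω).real (Iio t) ∂P ≤ F t * P.real A := by
    refine le_of_tendsto_of_frequently
      (tendsto_integral_measureReal_Iic_nhdsLT (P.restrict A) hμ hmeas t)
      ((hG.1.dense_setOf_continuousAt.frequently_nhdsLT t).mp
        (eventually_nhdsWithin_of_forall fun s hst hGs => ?_))
    exact le_of_tendsto_of_tendsto' (hlimG s hGs) (hlimF t ht) fun _ =>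
      measureReal_mono (inter_subset_inter_right A fun _ hω => by
        exact lt_of_le_of_lt hω (mem_Iio.1 hst))
  have lower : F t * P.real A ≤ ∫ ω in A, (μ ω).real (Iio t) ∂P := by
    refine le_of_tendsto_of_frequently (ht.continuousWithinAt.tendsto.mul_const _)
      ((hF.1.dense_setOf_continuousAt.frequently_nhdsLT t).mp
        (eventually_nhdsWithin_of_forall fun s hst hFs => ?_))
    obtain ⟨s', hGs', hss', hs't⟩ := hG.1.dense_setOf_continuousAt.exists_between hst
    calc F s * P.real A
        ≤ ∫ ω in A, (μ ω).real (Iic s') ∂P :=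
          le_of_tendsto_of_tendsto' (hlimF s hFs) (hlimG s' hGs') fun _ =>
            measureReal_mono (inter_subset_inter_right A fun _ hω => (hω.trans hss').le)
      _ ≤ ∫ ω in A, (μ ω).real (Iio t) ∂P :=
          integral_mono (integrable_measureReal _ hμ (hmeas _ measurableSet_Iic))
            (integrable_measureReal _ hμ (hmeas _ measurableSet_Iio))
            fun _ => measureReal_mono (Iic_subset_Iio.2 hs't)
  change F t = 1 / P.real A * ∫ ω in A, (μ ω).real (Iio t) ∂P
  rw [← le_antisymm lower upper]
  field_simp

/-- For a determining sequence `(X_n)` with limit random measure `μ`, for every `A` with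
`P(A) > 0` and every continuity point `t` of the limiting distribution function `F_A`,
`F_A(t) = E_A(μ(-∞, t)) = (1/P(A)) ∫_A μ(ω)(-∞, t) dP(ω)`. -/
theorem statement15
    {Ω : Type*} [MeasurableSpace Ω] (P : Measure Ω) [IsProbabilityMeasure P]
    (X : ℕ → Ω → ℝ) (hXmeas : ∀ n, Measurable (X n)) (μ : Ω → Measure ℝ)
    (hdet : Determining P X) (hlrm : IsLimitRandomMeasure P X μ)
    (A : Set Ω) (hA : MeasurableSet A) (hPA : P A ≠ 0)
    (F : ℝ → ℝ) (hF : IsDistFun F)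
    (hFA : ∀ s : ℝ, ContinuousAt F s →
      Tendsto (fun n => (P (A ∩ {ω | X n ω < s})).toReal / (P A).toReal) atTop (𝓝 (F s)))
    (t : ℝ) (ht : ContinuousAt F t) :
    F t = (1 / (P A).toReal) * ∫ ω in A, (μ ω (Set.Iio t)).toReal ∂P :=
  statement15_general P X hXmeas μ hlrm A hA hPA F hF hFA t ht
end
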